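/- arXiv:2407.21294 — 3 statements merged into one kernel-verified Lean document; each statement's English description precedes it below -/
import Mathlib

section
/- In the stable matching game, a pure strategy profile x* ∈ {0,1}^{n×n} is the characteristic vector of a stable matching if and only if x* is a pure Nash equilibrium of the stable matching game. -/
/-! In a pure profile where man `m` picks woman `p m`, his payoff is `μ_{m, p m}` unless she is
also picked by a man she prefers to him, in which case it is `0`. At a pure equilibrium no man
is outbid in this way, since he could switch to a woman whom no other man picks (one exists by
pigeonhole) and earn a positive payoff; hence `p` is a bijection `σ`, and a deviation of `m` to
`σ m'` is profitable exactly when `(m, σ m')` is a blocking pair. -/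

open Finset Real MeasureTheory

namespace SM

variable {n : ℕ}

/-- The set of men that woman `w` strictly prefers to man `m`
(`rankW w k` is woman `w`'s cardinal ranking score of man `k`;
`k >_w m` iff `rankW w m < rankW w k`). -/
noncomputable def better (rankW : Fin n → Fin n → ℝ) (w m : Fin n) : Finset (Fin n) :=
  Finset.univ.filter fun k => rankW w m < rankW w k

/-- Market assumptions: men's cardinal preferences lie in `(0,1]` with no ties, and each
woman's ranking of the men is strict (injective scores). -/
def MarketHyp (μp rankW : Fin n → Fin n → ℝ) : Prop :=
  (∀ m w, μp m w ∈ Set.Ioc (0:ℝ) 1) ∧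
  (∀ m w w', w ≠ w' → μp m w ≠ μp m w') ∧
  (∀ w, Function.Injective (rankW w))

/-- `v_{mw}(x) = μ_{mw} ∏_{k >_w m} (1 - x_{kw})`. -/
noncomputable def vv (μp rankW : Fin n → Fin n → ℝ) (x : Fin n → Fin n → ℝ) (m w : Fin n) : ℝ :=
  μp m w * ∏ k ∈ better rankW w m, (1 - x k w)

/-- Payoff `u_m(x) = ∑_w v_{mw}(x) x_{mw}` of man `m` in the stable matching game. -/
noncomputable def uu (μp rankW : Fin n → Fin n → ℝ) (x : Fin n → Fin n → ℝ) (m : Fin n) : ℝ :=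
  ∑ w, vv μp rankW x m w * x m w

/-- Mixed strategy: a probability vector over the women. -/
def IsStrategy (y : Fin n → ℝ) : Prop := (∀ w, 0 ≤ y w) ∧ ∑ w, y w = 1

/-- Pure strategy: the indicator vector of a single woman. -/
def IsPure (y : Fin n → ℝ) : Prop := ∃ w₀, y = fun w => if w = w₀ then (1:ℝ) else 0

/-- (Mixed) Nash equilibrium of the stable matching game. -/
def IsNE (μp rankW : Fin n → Fin n → ℝ) (x : Fin n → Fin n → ℝ) : Prop :=
  (∀ m, IsStrategy (x m)) ∧
  ∀ m y, IsStrategy y → uu μp rankW (Function.update x m y) m ≤ uu μp rankW x m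

/-- Pure Nash equilibrium of the stable matching game. -/
def IsPureNE (μp rankW : Fin n → Fin n → ℝ) (x : Fin n → Fin n → ℝ) : Prop :=
  (∀ m, IsPure (x m)) ∧
  ∀ m y, IsPure y → uu μp rankW (Function.update x m y) m ≤ uu μp rankW x m

/-- Characteristic vector of the perfect matching `σ`. -/
def charVec (σ : Equiv.Perm (Fin n)) : Fin n → Fin n → ℝ :=
  fun m w => if w = σ m then 1 else 0

/-- A perfect matching `σ` is stable iff it admits no blocking pair `(m, σ m')`. -/
def IsStableMatching (μp rankW : Fin n → Fin n → ℝ) (σ : Equiv.Perm (Fin n)) : Prop :=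
  ¬ ∃ m m' : Fin n, m ≠ m' ∧ μp m (σ m) < μp m (σ m') ∧ rankW (σ m') m' < rankW (σ m') m

/-- `Δ = min_{m, w ≠ w'} |μ_{mw} - μ_{mw'}|`. -/
noncomputable def gapDelta (μp : Fin n → Fin n → ℝ) : ℝ :=
  sInf {d : ℝ | ∃ m w w' : Fin n, w ≠ w' ∧ d = |μp m w - μp m w'|}

/-- `μ_min = min_{m,w} μ_{mw}`. -/
noncomputable def muMin (μp : Fin n → Fin n → ℝ) : ℝ :=
  sInf {a : ℝ | ∃ m w : Fin n, a = μp m w}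

/-- `μ_max = max_{m,w} μ_{mw}`. -/
noncomputable def muMax (μp : Fin n → Fin n → ℝ) : ℝ :=
  sSup {a : ℝ | ∃ m w : Fin n, a = μp m w}

/-- Entrywise ℓ¹ distance on strategy profiles. -/
noncomputable def l1dist (x y : Fin n → Fin n → ℝ) : ℝ :=
  ∑ m, ∑ w, |x m w - y m w|

/-- The logit (exponential-weights) map. -/
noncomputable def logit (η : ℝ) (L : Fin n → ℝ) (w : Fin n) : ℝ :=
  Real.exp (η * L w) / ∑ w', Real.exp (η * L w')

lemma Fintype.exists_forall_ne_apply_ne {α : Type*} [Fintype α] (p : α → α) (m : α) :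
    ∃ w, ∀ j ≠ m, p j ≠ w := by
  classical
  have hcard : #((univ.erase m).image p) < #(univ : Finset α) :=
    card_image_le.trans_lt (card_erase_lt_of_mem (mem_univ m))
  obtain ⟨w, -, hw⟩ := exists_mem_notMem_of_card_lt_card hcard
  exact ⟨w, fun j hj hpj => hw (mem_image.2 ⟨j, mem_erase.2 ⟨hj, mem_univ j⟩, hpj⟩)⟩

def pureProfile (p : Fin n → Fin n) : Fin n → Fin n → ℝ :=
  fun m w => if w = p m then 1 else 0

def Outbid (rankW : Fin n → Fin n → ℝ) (p : Fin n → Fin n) (m : Fin n) : Prop :=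
  ∃ k, p k = p m ∧ rankW (p m) m < rankW (p m) k

section Payoff

variable {μp rankW : Fin n → Fin n → ℝ} {p : Fin n → Fin n} {m : Fin n}

lemma uu_pureProfile_eq_vv :
    uu μp rankW (pureProfile p) m = vv μp rankW (pureProfile p) m (p m) := by
  rw [uu, sum_eq_single (p m) (fun w _ hw => by simp [pureProfile, hw]) (by simp)]
  simp [pureProfile]

lemma uu_pureProfile_of_outbid (h : Outbid rankW p m) : uu μp rankW (pureProfile p) m = 0 := by
  obtain ⟨k, hk, hlt⟩ := h
  rw [uu_pureProfile_eq_vv, vv, prod_eq_zero (i := k) (by simpa [better] using hlt)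
    (by simp [pureProfile, hk]), mul_zero]

lemma uu_pureProfile_of_not_outbid (h : ¬ Outbid rankW p m) :
    uu μp rankW (pureProfile p) m = μp m (p m) := by
  rw [uu_pureProfile_eq_vv, vv, prod_eq_one, mul_one]
  intro k hk
  have : p k ≠ p m := fun hpk => h ⟨k, hpk, by simpa [better] using hk⟩
  simp [pureProfile, Ne.symm this]

end Payoff

lemma not_outbid_of_injective {rankW : Fin n → Fin n → ℝ} {p : Fin n → Fin n}
    (hp : Function.Injective p) (m : Fin n) : ¬ Outbid rankW p m := by
  rintro ⟨k, hk, hlt⟩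
  exact hlt.ne (by rw [hp hk])

lemma outbid_update_iff {rankW : Fin n → Fin n → ℝ} {p : Fin n → Fin n} {m w : Fin n} :
    Outbid rankW (Function.update p m w) m ↔ ∃ k ≠ m, p k = w ∧ rankW w m < rankW w k := by
  constructor
  · rintro ⟨k, hk, hlt⟩
    have hkm : k ≠ m := by rintro rfl; exact hlt.false
    simp only [Function.update_self, Function.update_of_ne hkm] at hk hlt
    exact ⟨k, hkm, hk, hlt⟩
  · rintro ⟨k, hkm, hk, hlt⟩
    exact ⟨k, by simpa [Function.update_of_ne hkm], by simpa using hlt⟩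

lemma update_pureProfile (p : Fin n → Fin n) (m w : Fin n) :
    Function.update (pureProfile p) m (fun w' => if w' = w then 1 else 0) =
      pureProfile (Function.update p m w) := by
  funext k w'
  rcases eq_or_ne k m with rfl | hk
  · simp [pureProfile]
  · simp [pureProfile, Function.update_of_ne hk]

lemma isPureNE_pureProfile_iff {μp rankW : Fin n → Fin n → ℝ} {p : Fin n → Fin n} :
    IsPureNE μp rankW (pureProfile p) ↔ ∀ m w,
      uu μp rankW (pureProfile (Function.update p m w)) m ≤ uu μp rankW (pureProfile p) m := by
  refine ⟨fun h m w => ?_, fun h => ⟨fun m => ⟨p m, rfl⟩, ?_⟩⟩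
  · simpa [update_pureProfile] using h.2 m _ ⟨w, rfl⟩
  · rintro m _ ⟨w, rfl⟩
    simpa [update_pureProfile] using h m w

section Equilibrium

variable {μp rankW : Fin n → Fin n → ℝ}

theorem isPureNE_charVec_of_isStableMatching (hμ : ∀ m w, 0 ≤ μp m w)
    (hr : ∀ w, Function.Injective (rankW w)) {σ : Equiv.Perm (Fin n)}
    (hσ : IsStableMatching μp rankW σ) : IsPureNE μp rankW (charVec σ) := by
  refine isPureNE_pureProfile_iff.2 fun m w => ?_
  rw [uu_pureProfile_of_not_outbid (not_outbid_of_injective σ.injective m)]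
  by_cases hout : Outbid rankW (Function.update σ m w) m
  · rw [uu_pureProfile_of_outbid hout]
    exact hμ m (σ m)
  rw [uu_pureProfile_of_not_outbid hout, Function.update_self]
  obtain ⟨m', rfl⟩ := σ.surjective w
  rcases eq_or_ne m' m with rfl | hm'
  · exact le_rfl
  have hrank : rankW (σ m') m' < rankW (σ m') m :=
    (not_lt.1 fun hlt => hout (outbid_update_iff.2 ⟨m', hm', rfl, hlt⟩)).lt_of_ne
      fun h => hm' (hr _ h)
  exact not_lt.1 fun hμlt => hσ ⟨m, m', hm'.symm, hμlt, hrank⟩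

variable {p : Fin n → Fin n}

lemma not_outbid_of_isPureNE (hμ : ∀ m w, 0 < μp m w)
    (hNE : IsPureNE μp rankW (pureProfile p)) (m : Fin n) : ¬ Outbid rankW p m := by
  intro hout
  obtain ⟨w, hw⟩ := Fintype.exists_forall_ne_apply_ne p m
  have hfree : ¬ Outbid rankW (Function.update p m w) m := by
    intro h
    obtain ⟨k, hkm, hk, -⟩ := outbid_update_iff.1 h
    exact hw k hkm hk
  have hdev := isPureNE_pureProfile_iff.1 hNE m w
  rw [uu_pureProfile_of_not_outbid hfree, uu_pureProfile_of_outbid hout,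
    Function.update_self] at hdev
  exact (hμ m w).not_ge hdev

lemma injective_of_isPureNE (hμ : ∀ m w, 0 < μp m w) (hr : ∀ w, Function.Injective (rankW w))
    (hNE : IsPureNE μp rankW (pureProfile p)) : Function.Injective p := by
  intro a b hab
  by_contra hne
  rcases (hr (p a)).ne hne |>.lt_or_gt with hlt | hlt
  · exact not_outbid_of_isPureNE hμ hNE a ⟨b, hab.symm, hlt⟩
  · exact not_outbid_of_isPureNE hμ hNE b ⟨a, hab, hab ▸ hlt⟩

theorem isStableMatching_of_isPureNE_charVec {σ : Equiv.Perm (Fin n)}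
    (hNE : IsPureNE μp rankW (charVec σ)) : IsStableMatching μp rankW σ := by
  rintro ⟨m, m', hmm', hμlt, hrank⟩
  have hfree : ¬ Outbid rankW (Function.update σ m (σ m')) m := by
    intro h
    obtain ⟨k, hkm, hk, hlt⟩ := outbid_update_iff.1 h
    obtain rfl := σ.injective hk
    exact hlt.not_gt hrank
  have hdev := isPureNE_pureProfile_iff.1 hNE m (σ m')
  rw [uu_pureProfile_of_not_outbid hfree,
    uu_pureProfile_of_not_outbid (not_outbid_of_injective σ.injective m),
    Function.update_self] at hdev
  exact hdev.not_gt hμlt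

end Equilibrium

/-- Theorem 1: a pure strategy profile is the characteristic vector of a
stable matching iff it is a pure Nash equilibrium of the stable matching game. -/
theorem pure_NE_iff_stable {n : ℕ} (μp rankW : Fin n → Fin n → ℝ)
    (hM : MarketHyp μp rankW)
    (x : Fin n → Fin n → ℝ) (hx : ∀ m, IsPure (x m)) :
    (∃ σ : Equiv.Perm (Fin n), IsStableMatching μp rankW σ ∧ x = charVec σ) ↔
      IsPureNE μp rankW x := by
  obtain ⟨hμ, -, hr⟩ := hM
  have hμpos : ∀ m w, 0 < μp m w := fun m w => (hμ m w).1
  choose p hp using hx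
  obtain rfl : x = pureProfile p := funext hp
  constructor
  · rintro ⟨σ, hσ, hxσ⟩
    rw [hxσ]
    exact isPureNE_charVec_of_isStableMatching (fun m w => (hμpos m w).le) hr hσ
  · intro hNE
    have hinj := injective_of_isPureNE hμpos hr hNE
    let σ := Equiv.ofBijective p (Finite.injective_iff_bijective.1 hinj)
    have hxσ : pureProfile p = charVec σ := rfl
    exact ⟨σ, isStableMatching_of_isPureNE_charVec (hxσ ▸ hNE), hxσ⟩

end SM
end

section
/- Let x be a mixed Nash equilibrium of the stable matching game in which every woman receives at least one fractional proposal (for every w ∈ W there exists m with x_{mw} > 0). For each man m, let w_m be the least preferred woman among those he fractionally proposes to, i.e., w_m = argmin_{w∈W} {μ_{mw} : x_{mw} > 0}. Then {(m, w_m) : m ∈ M} is a stable matching, and hence its characteristic vector is a pure Nash equilibrium of the stable matching game. -/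
open Finset Real MeasureTheory

namespace SM

variable {n : ℕ}

/-!
In equilibrium a man earns his payoff from every woman in his support and no more from any other.
If no man whom `w` prefers to `m` proposes to `w`, then `m` would get `w` for sure by proposing to
her, so he likes her no more than any woman in his support. Applied to each woman's favourite
proposer, this forces her to be his least preferred woman in his support: the rounding is onto,
hence a bijection, and every man is the favourite proposer of his partner. A blocking pair
`(m, w')` would then give `m` a sure `μp m w'` above his equilibrium payoff. Finally, against the
characteristic vector of a stable matching, a deviation to `w` wins `w` only if `w` prefers the
deviator to her partner, and stability makes that unprofitable.
-/

variable {μp rankW : Fin n → Fin n → ℝ} {x : Fin n → Fin n → ℝ}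

lemma notMem_better_self (rankW : Fin n → Fin n → ℝ) (w m : Fin n) : m ∉ better rankW w m := by
  simp [better]

lemma isStrategy_pure (w₀ : Fin n) : IsStrategy fun w : Fin n => if w = w₀ then (1 : ℝ) else 0 :=
  ⟨fun w => by positivity, by simp⟩

lemma IsStrategy.le_one {y : Fin n → ℝ} (hy : IsStrategy y) (w : Fin n) : y w ≤ 1 :=
  hy.2 ▸ Finset.single_le_sum (fun i _ => hy.1 i) (Finset.mem_univ w)

lemma vv_update_self (y : Fin n → ℝ) (m w : Fin n) :
    vv μp rankW (Function.update x m y) m w = vv μp rankW x m w := by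
  unfold vv
  congr 1
  refine Finset.prod_congr rfl fun k hk => ?_
  rw [Function.update_of_ne (ne_of_mem_of_not_mem hk (notMem_better_self rankW w m))]

lemma uu_update_pure (m w₀ : Fin n) :
    uu μp rankW (Function.update x m fun w => if w = w₀ then 1 else 0) m = vv μp rankW x m w₀ := by
  simp [uu, vv_update_self]

lemma vv_eq_of_forall_better_eq_zero {m w : Fin n} (h : ∀ k ∈ better rankW w m, x k w = 0) :
    vv μp rankW x m w = μp m w := by
  rw [vv, Finset.prod_eq_one fun k hk => by rw [h k hk, sub_zero], mul_one]

lemma vv_le_of_isStrategy (hμ : ∀ m w, 0 ≤ μp m w) (hx : ∀ m, IsStrategy (x m)) (m w : Fin n) :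
    vv μp rankW x m w ≤ μp m w :=
  mul_le_of_le_one_right (hμ m w) <| Finset.prod_le_one
    (fun k _ => sub_nonneg.2 ((hx k).le_one w)) (fun k _ => sub_le_self _ ((hx k).1 w))

lemma IsNE.vv_le_uu (hNE : IsNE μp rankW x) (m w : Fin n) :
    vv μp rankW x m w ≤ uu μp rankW x m := by
  simpa only [uu_update_pure] using hNE.2 m _ (isStrategy_pure w)

/-- The payoff is an average of the `vv μp rankW x m w` weighted by `x m`, and none of them exceeds
it, so every woman in the support attains it. -/
lemma IsNE.vv_eq_uu_of_pos (hNE : IsNE μp rankW x) {m w : Fin n} (hw : 0 < x m w) :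
    vv μp rankW x m w = uu μp rankW x m := by
  have hsum : ∑ w', (uu μp rankW x m - vv μp rankW x m w') * x m w' = 0 := by
    simp only [sub_mul, Finset.sum_sub_distrib, ← Finset.mul_sum, (hNE.1 m).2, mul_one, uu,
      sub_self]
  have hterm := (Finset.sum_eq_zero_iff_of_nonneg fun w' _ =>
    mul_nonneg (sub_nonneg.2 (hNE.vv_le_uu m w')) ((hNE.1 m).1 w')).1 hsum w (Finset.mem_univ w)
  linarith [(mul_eq_zero.1 hterm).resolve_right hw.ne']

lemma IsNE.le_of_forall_better_eq_zero (hNE : IsNE μp rankW x) (hμ : ∀ m w, 0 ≤ μp m w)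
    {m w w' : Fin n} (hfree : ∀ k ∈ better rankW w m, x k w = 0) (hw' : 0 < x m w') :
    μp m w ≤ μp m w' :=
  calc μp m w = vv μp rankW x m w := (vv_eq_of_forall_better_eq_zero hfree).symm
    _ ≤ uu μp rankW x m := hNE.vv_le_uu m w
    _ = vv μp rankW x m w' := (hNE.vv_eq_uu_of_pos hw').symm
    _ ≤ μp m w' := vv_le_of_isStrategy hμ hNE.1 m w'

lemma exists_top_proposer {w : Fin n} (hx : ∀ m, 0 ≤ x m w) (h : ∃ m, 0 < x m w) :
    ∃ m, 0 < x m w ∧ ∀ k ∈ better rankW w m, x k w = 0 := by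
  obtain ⟨m, hm, hmax⟩ := Finset.exists_max_image ({m | 0 < x m w} : Finset (Fin n)) (rankW w)
    (h.imp fun m hm => by simpa using hm)
  refine ⟨m, by simpa using hm, fun k hk => ?_⟩
  simp only [better, Finset.mem_filter, Finset.mem_univ, true_and] at hk
  by_contra hne
  exact (hmax k (by simpa using lt_of_le_of_ne (hx k) (Ne.symm hne))).not_gt hk

lemma vv_charVec (σ : Equiv.Perm (Fin n)) (m w : Fin n) :
    vv μp rankW (charVec σ) m w = if rankW w m < rankW w (σ.symm w) then 0 else μp m w := by
  have hcv : ∀ k, charVec σ k w = if k = σ.symm w then 1 else 0 := fun k => by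
    simp only [charVec, Equiv.eq_symm_apply, eq_comm]
  split_ifs with h
  · rw [vv, Finset.prod_eq_zero (i := σ.symm w) (by simp [better, h]) (by simp [hcv]), mul_zero]
  · refine vv_eq_of_forall_better_eq_zero fun k hk => ?_
    rw [hcv, if_neg]
    rintro rfl
    simp [better, h] at hk

lemma IsStableMatching.isPureNE_charVec {σ : Equiv.Perm (Fin n)}
    (hstab : IsStableMatching μp rankW σ) (hμ : ∀ m w, 0 ≤ μp m w)
    (hrank : ∀ w, Function.Injective (rankW w)) : IsPureNE μp rankW (charVec σ) := by
  refine ⟨fun m => ⟨σ m, rfl⟩, ?_⟩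
  rintro m _ ⟨w, rfl⟩
  have hown : uu μp rankW (charVec σ) m = μp m (σ m) := by
    have hupd : Function.update (charVec σ) m (fun w => if w = σ m then 1 else 0) = charVec σ :=
      Function.update_eq_self m (charVec σ)
    rw [← hupd, uu_update_pure, vv_charVec]
    simp
  rw [uu_update_pure, hown, vv_charVec]
  split_ifs with h
  · exact hμ m (σ m)
  · obtain rfl | hm := eq_or_ne (σ.symm w) m
    · simp
    have hlt : rankW w (σ.symm w) < rankW w m :=
      (not_lt.1 h).lt_of_ne fun heq => hm (hrank w heq)
    by_contra! hblock
    exact hstab ⟨m, σ.symm w, hm.symm, by simpa using hblock, by simpa using hlt⟩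

def IsLeastPreferredInSupport (μp x : Fin n → Fin n → ℝ) (wm : Fin n → Fin n) : Prop :=
  ∀ m, 0 < x m (wm m) ∧ ∀ w, 0 < x m w → μp m (wm m) ≤ μp m w

section Rounding

variable {wm : Fin n → Fin n}

lemma IsNE.rounding_eq_of_forall_better_eq_zero (hNE : IsNE μp rankW x)
    (hμ : ∀ m w, 0 ≤ μp m w) (hties : ∀ m w w', w ≠ w' → μp m w ≠ μp m w')
    (hwm : IsLeastPreferredInSupport μp x wm) {m w : Fin n} (hpos : 0 < x m w)
    (hfree : ∀ k ∈ better rankW w m, x k w = 0) : wm m = w := by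
  by_contra hne
  exact hties m _ _ hne <|
    ((hwm m).2 w hpos).antisymm (hNE.le_of_forall_better_eq_zero hμ hfree (hwm m).1)

lemma IsNE.rounding_surjective (hNE : IsNE μp rankW x)
    (hμ : ∀ m w, 0 ≤ μp m w) (hties : ∀ m w w', w ≠ w' → μp m w ≠ μp m w')
    (hwm : IsLeastPreferredInSupport μp x wm) (hfull : ∀ w, ∃ m, 0 < x m w) :
    Function.Surjective wm := fun w => by
  obtain ⟨m, hpos, hfree⟩ := exists_top_proposer (fun m => (hNE.1 m).1 w) (hfull w)
  exact ⟨m, hNE.rounding_eq_of_forall_better_eq_zero hμ hties hwm hpos hfree⟩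

lemma IsNE.forall_better_rounding_eq_zero (hNE : IsNE μp rankW x)
    (hμ : ∀ m w, 0 ≤ μp m w) (hties : ∀ m w w', w ≠ w' → μp m w ≠ μp m w')
    (hwm : IsLeastPreferredInSupport μp x wm) (hinj : Function.Injective wm) (m : Fin n) :
    ∀ k ∈ better rankW (wm m) m, x k (wm m) = 0 := by
  obtain ⟨m', hpos, hfree⟩ :=
    exists_top_proposer (rankW := rankW) (fun k => (hNE.1 k).1 (wm m)) ⟨m, (hwm m).1⟩
  obtain rfl : m' = m := hinj (hNE.rounding_eq_of_forall_better_eq_zero hμ hties hwm hpos hfree)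
  exact hfree

lemma IsNE.isStableMatching_of_rounding (hNE : IsNE μp rankW x)
    (hμ : ∀ m w, 0 ≤ μp m w) (hties : ∀ m w w', w ≠ w' → μp m w ≠ μp m w')
    (hwm : IsLeastPreferredInSupport μp x wm) {σ : Equiv.Perm (Fin n)} (hσ : ∀ m, σ m = wm m) :
    IsStableMatching μp rankW σ := by
  have hσwm : ⇑σ = wm := funext hσ
  subst hσwm
  rintro ⟨m, m', -, hprefers, hranks⟩
  have hfree : ∀ k ∈ better rankW (σ m') m, x k (σ m') = 0 := fun k hk =>
    hNE.forall_better_rounding_eq_zero hμ hties hwm σ.injective m' k <| by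
      simp only [better, Finset.mem_filter, Finset.mem_univ, true_and] at hk ⊢
      exact hranks.trans hk
  exact (hNE.le_of_forall_better_eq_zero hμ hfree (hwm m).1).not_gt hprefers

end Rounding

/-- Theorem 2: rounding a mixed NE in which every woman receives a fractional
proposal, by matching each man to his least preferred woman in his support, yields a
stable matching, whose characteristic vector is a pure NE. -/
theorem mixed_NE_rounding {n : ℕ} (μp rankW : Fin n → Fin n → ℝ)
    (hM : MarketHyp μp rankW)
    (x : Fin n → Fin n → ℝ) (hNE : IsNE μp rankW x)
    (hfull : ∀ w : Fin n, ∃ m, 0 < x m w)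
    (wm : Fin n → Fin n)
    (hwm : ∀ m, 0 < x m (wm m) ∧ ∀ w, 0 < x m w → μp m (wm m) ≤ μp m w) :
    ∃ σ : Equiv.Perm (Fin n), (∀ m, σ m = wm m) ∧ IsStableMatching μp rankW σ ∧
      IsPureNE μp rankW (charVec σ) := by
  obtain ⟨hμ, hties, hrank⟩ := hM
  have hμ₀ : ∀ m w, 0 ≤ μp m w := fun m w => (hμ m w).1.le
  have hsurj := hNE.rounding_surjective hμ₀ hties hwm hfull
  let σ : Equiv.Perm (Fin n) := .ofBijective wm ⟨Finite.injective_iff_surjective.2 hsurj, hsurj⟩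
  have hstab : IsStableMatching μp rankW σ :=
    hNE.isStableMatching_of_rounding hμ₀ hties hwm fun _ => rfl
  exact ⟨σ, fun _ => rfl, hstab, hstab.isPureNE_charVec hμ₀ hrank⟩

end SM
end

section
/- Let X* be a pure Nash equilibrium of the stable matching game and set c = (1/8) min{Δ, μ_min}. For any strategy profile x with ‖x − X*‖₁ ≤ c/μ_max, every man m satisfies v_{m w*}(x) − v_{mw}(x) > c for all w ≠ w*, where w* is the woman matched to m under X* (i.e., X*_{m w*} = 1). -/
open Finset Real MeasureTheory

namespace SM

variable {n : ℕ}

lemma abs_prod_sub_prod_le {ι : Type*} (s : Finset ι) (a b : ι → ℝ)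
    (ha : ∀ i ∈ s, 0 ≤ a i ∧ a i ≤ 1) (hb : ∀ i ∈ s, 0 ≤ b i ∧ b i ≤ 1) :
    |∏ i ∈ s, a i - ∏ i ∈ s, b i| ≤ ∑ i ∈ s, |a i - b i| := by
  induction s using Finset.cons_induction with
  | empty => simp
  | cons i s hi ih =>
    simp only [Finset.prod_cons, Finset.sum_cons]
    have ha' := ha i (Finset.mem_cons_self i s)
    have hb' := hb i (Finset.mem_cons_self i s)
    have ihs := ih (fun j hj => ha j (Finset.mem_cons_of_mem hj))
      (fun j hj => hb j (Finset.mem_cons_of_mem hj))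
    have hpb0 : 0 ≤ ∏ j ∈ s, b j :=
      Finset.prod_nonneg fun j hj => (hb j (Finset.mem_cons_of_mem hj)).1
    have hpb1 : (∏ j ∈ s, b j) ≤ 1 :=
      Finset.prod_le_one (fun j hj => (hb j (Finset.mem_cons_of_mem hj)).1)
        (fun j hj => (hb j (Finset.mem_cons_of_mem hj)).2)
    have key : a i * ∏ j ∈ s, a j - b i * ∏ j ∈ s, b j
        = a i * (∏ j ∈ s, a j - ∏ j ∈ s, b j) + (a i - b i) * ∏ j ∈ s, b j := by ring
    rw [key]
    calc |a i * (∏ j ∈ s, a j - ∏ j ∈ s, b j) + (a i - b i) * ∏ j ∈ s, b j|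
        ≤ |a i * (∏ j ∈ s, a j - ∏ j ∈ s, b j)| + |(a i - b i) * ∏ j ∈ s, b j| :=
          abs_add_le _ _
      _ = |a i| * |∏ j ∈ s, a j - ∏ j ∈ s, b j| + |a i - b i| * |∏ j ∈ s, b j| := by
          rw [abs_mul, abs_mul]
      _ ≤ 1 * (∑ j ∈ s, |a j - b j|) + |a i - b i| * 1 := by
          have h1 : |a i| ≤ 1 := by rw [abs_of_nonneg ha'.1]; exact ha'.2
          have h2 : |∏ j ∈ s, b j| ≤ 1 := by rw [abs_of_nonneg hpb0]; exact hpb1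
          have h3 := abs_nonneg (a i - b i)
          have h4 := abs_nonneg (∏ j ∈ s, a j - ∏ j ∈ s, b j)
          have h5 := abs_nonneg (a i)
          have h6 := abs_nonneg (∏ j ∈ s, b j)
          nlinarith [ihs]
      _ = |a i - b i| + ∑ j ∈ s, |a j - b j| := by ring

/-- Lemma 5: near a pure NE `X*`, proposing to one's stable partner is strictly
the best decision, with margin `c`. -/
theorem local_strict_gap {n : ℕ} (μp rankW : Fin n → Fin n → ℝ)
    (hM : MarketHyp μp rankW)
    (Xstar : Fin n → Fin n → ℝ) (hNE : IsPureNE μp rankW Xstar)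
    (c : ℝ) (hc : c = (1/8) * min (gapDelta μp) (muMin μp))
    (x : Fin n → Fin n → ℝ) (hx : ∀ m, IsStrategy (x m))
    (hdist : l1dist x Xstar ≤ c / muMax μp) :
    ∀ m wstar : Fin n, Xstar m wstar = 1 →
      ∀ w : Fin n, w ≠ wstar → c < vv μp rankW x m wstar - vv μp rankW x m w := by
  intro m wstar hXw w hw
  obtain ⟨hIoc, hties, hinj⟩ := hM
  obtain ⟨hpure, hne⟩ := hNE
  -- Xstar m is the indicator of wstar
  have hXm : Xstar m = fun w' => if w' = wstar then (1:ℝ) else 0 := by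
    obtain ⟨w₀, h0⟩ := hpure m
    have hw0 : wstar = w₀ := by
      by_contra hne'
      rw [h0] at hXw
      simp only [if_neg hne'] at hXw
      norm_num at hXw
    subst hw0; exact h0
  have hX01 : ∀ k w', Xstar k w' = 0 ∨ Xstar k w' = 1 := by
    intro k w'
    obtain ⟨w₀, h0⟩ := hpure k
    rw [h0]; by_cases h : w' = w₀ <;> simp [h]
  have hx01 : ∀ k w', 0 ≤ x k w' ∧ x k w' ≤ 1 := by
    intro k w'
    obtain ⟨hpos, hsum⟩ := hx k
    refine ⟨hpos w', ?_⟩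
    calc x k w' ≤ ∑ w'', x k w'' :=
          Finset.single_le_sum (fun i _ => hpos i) (Finset.mem_univ w')
      _ = 1 := hsum
  -- vv doesn't depend on man m's own row
  have hvupd : ∀ (y : Fin n → ℝ) w',
      vv μp rankW (Function.update Xstar m y) m w' = vv μp rankW Xstar m w' := by
    intro y w'
    unfold vv
    congr 1
    apply Finset.prod_congr rfl
    intro k hk
    have hkm : k ≠ m := by
      intro h; subst h
      have := (Finset.mem_filter.mp hk).2
      exact lt_irrefl _ this
    rw [Function.update_of_ne hkm]
  -- NE consequence: wstar maximizes vv at Xstar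
  have huuX : uu μp rankW Xstar m = vv μp rankW Xstar m wstar := by
    unfold uu
    rw [hXm]
    simp [Finset.sum_ite_eq']
  have hkey : ∀ w', vv μp rankW Xstar m w' ≤ vv μp rankW Xstar m wstar := by
    intro w'
    have hP : IsPure (fun w'' => if w'' = w' then (1:ℝ) else 0) := ⟨w', rfl⟩
    have h := hne m _ hP
    rw [huuX] at h
    refine le_trans (le_of_eq ?_) h
    unfold uu
    rw [Finset.sum_congr rfl (fun w'' _ => by
      rw [hvupd, Function.update_self])]
    simp [Finset.sum_ite_eq']
  -- products at Xstar are 0 or 1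
  have hprod01 : ∀ w', (∏ k ∈ better rankW w' m, (1 - Xstar k w')) = 0 ∨
      (∏ k ∈ better rankW w' m, (1 - Xstar k w')) = 1 := by
    intro w'
    by_cases hz : ∃ k ∈ better rankW w' m, Xstar k w' = 1
    · left
      obtain ⟨k, hk, h1⟩ := hz
      exact Finset.prod_eq_zero hk (by rw [h1]; ring)
    · right
      apply Finset.prod_eq_one
      intro k hk
      rcases hX01 k w' with h | h
      · rw [h]; ring
      · exact absurd ⟨k, hk, h⟩ hz
  have hvX0 : ∀ w', 0 ≤ vv μp rankW Xstar m w' := by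
    intro w'
    unfold vv
    apply mul_nonneg (le_of_lt (hIoc m w').1)
    apply Finset.prod_nonneg
    intro k _
    rcases hX01 k w' with h | h <;> rw [h] <;> norm_num
  -- Claim A: the product at wstar equals 1
  have hA : (∏ k ∈ better rankW wstar m, (1 - Xstar k wstar)) = 1 := by
    rcases hprod01 wstar with h0 | h1
    · exfalso
      have hvws : vv μp rankW Xstar m wstar = 0 := by unfold vv; rw [h0, mul_zero]
      have hall : ∀ w', (∏ k ∈ better rankW w' m, (1 - Xstar k w')) = 0 := by
        intro w'
        have h1 := hkey w'
        rw [hvws] at h1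
        have h2 := hvX0 w'
        have h3 : vv μp rankW Xstar m w' = 0 := le_antisymm h1 h2
        unfold vv at h3
        rcases mul_eq_zero.mp h3 with h | h
        · exact absurd h (ne_of_gt (hIoc m w').1)
        · exact h
      have hch : ∀ w', ∃ k, k ∈ better rankW w' m ∧ Xstar k w' = 1 := by
        intro w'
        obtain ⟨k, hk, hk0⟩ := Finset.prod_eq_zero_iff.mp (hall w')
        exact ⟨k, hk, by linarith⟩
      choose f hf1 hf2 using hch
      have hfm : ∀ w', f w' ≠ m := by
        intro w' h
        have := (Finset.mem_filter.mp (hf1 w')).2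
        rw [h] at this
        exact lt_irrefl _ this
      have hfinj : Function.Injective f := by
        intro w1 w2 h12
        obtain ⟨w₀, h0⟩ := hpure (f w1)
        have e1 : w1 = w₀ := by
          have h := hf2 w1; rw [h0] at h
          by_contra hcon
          simp only [if_neg hcon] at h
          norm_num at h
        have e2 : w2 = w₀ := by
          have h := hf2 w2; rw [← h12, h0] at h
          by_contra hcon
          simp only [if_neg hcon] at h
          norm_num at h
        rw [e1, e2]
      obtain ⟨w', hw'⟩ := Finite.injective_iff_surjective.mp hfinj m
      exact hfm w' hw'
    · exact h1
  have hvws : vv μp rankW Xstar m wstar = μp m wstar := by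
    unfold vv; rw [hA, mul_one]
  -- constants
  have hSfin : {a : ℝ | ∃ m w : Fin n, a = μp m w}.Finite := by
    apply (Set.finite_range (fun p : Fin n × Fin n => μp p.1 p.2)).subset
    rintro a ⟨m', w', rfl⟩
    exact ⟨(m', w'), rfl⟩
  have hSne : {a : ℝ | ∃ m w : Fin n, a = μp m w}.Nonempty := ⟨μp m wstar, m, wstar, rfl⟩
  have hminmem : muMin μp ∈ {a : ℝ | ∃ m w : Fin n, a = μp m w} := hSne.csInf_mem hSfin
  have hminpos : 0 < muMin μp := by
    obtain ⟨m', w', h⟩ := hminmem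
    rw [h]; exact (hIoc m' w').1
  have hminle : muMin μp ≤ μp m wstar := csInf_le hSfin.bddBelow ⟨m, wstar, rfl⟩
  have hmaxmem : muMax μp ∈ {a : ℝ | ∃ m w : Fin n, a = μp m w} := hSne.csSup_mem hSfin
  have hmaxpos : 0 < muMax μp := by
    obtain ⟨m', w', h⟩ := hmaxmem
    rw [h]; exact (hIoc m' w').1
  have hmaxge : ∀ m' w', μp m' w' ≤ muMax μp := fun m' w' =>
    le_csSup hSfin.bddAbove ⟨m', w', rfl⟩
  have hSdfin : {d : ℝ | ∃ m w w' : Fin n, w ≠ w' ∧ d = |μp m w - μp m w'|}.Finite := by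
    apply (Set.finite_range
      (fun p : Fin n × Fin n × Fin n => |μp p.1 p.2.1 - μp p.1 p.2.2|)).subset
    rintro d ⟨m', w1, w2, _, rfl⟩
    exact ⟨(m', w1, w2), rfl⟩
  have hSdne : {d : ℝ | ∃ m w w' : Fin n, w ≠ w' ∧ d = |μp m w - μp m w'|}.Nonempty :=
    ⟨|μp m wstar - μp m w|, m, wstar, w, Ne.symm hw, rfl⟩
  have hdmem : gapDelta μp ∈ {d : ℝ | ∃ m w w' : Fin n, w ≠ w' ∧ d = |μp m w - μp m w'|} :=
    hSdne.csInf_mem hSdfin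
  have hdpos : 0 < gapDelta μp := by
    obtain ⟨m', w1, w2, hne12, h⟩ := hdmem
    rw [h]
    exact abs_pos.mpr (sub_ne_zero.mpr (hties m' w1 w2 hne12))
  have hdle : gapDelta μp ≤ |μp m wstar - μp m w| :=
    csInf_le hSdfin.bddBelow ⟨m, wstar, w, Ne.symm hw, rfl⟩
  have hcpos : 0 < c := by
    rw [hc]
    have := lt_min hdpos hminpos
    linarith
  -- Claim B: gap at Xstar is at least 8c
  have hB : min (gapDelta μp) (muMin μp) ≤
      vv μp rankW Xstar m wstar - vv μp rankW Xstar m w := by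
    rcases hprod01 w with h0 | h1
    · have hz : vv μp rankW Xstar m w = 0 := by unfold vv; rw [h0, mul_zero]
      rw [hvws, hz, sub_zero]
      exact le_trans (min_le_right _ _) hminle
    · have hvw : vv μp rankW Xstar m w = μp m w := by unfold vv; rw [h1, mul_one]
      have hle : μp m w ≤ μp m wstar := by
        have := hkey w
        rw [hvws, hvw] at this
        exact this
      have hne' : μp m w ≠ μp m wstar := hties m w wstar hw
      have hlt : μp m w < μp m wstar := lt_of_le_of_ne hle hne'
      have habs : |μp m wstar - μp m w| = μp m wstar - μp m w :=
        abs_of_pos (by linarith)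
      rw [hvws, hvw]
      calc min (gapDelta μp) (muMin μp) ≤ gapDelta μp := min_le_left _ _
        _ ≤ |μp m wstar - μp m w| := hdle
        _ = μp m wstar - μp m w := habs
  -- perturbation bound
  have hpert : ∀ w', |vv μp rankW x m w' - vv μp rankW Xstar m w'| ≤ c := by
    intro w'
    have hd : vv μp rankW x m w' - vv μp rankW Xstar m w'
        = μp m w' * ((∏ k ∈ better rankW w' m, (1 - x k w'))
          - (∏ k ∈ better rankW w' m, (1 - Xstar k w'))) := by
      unfold vv; ring
    rw [hd, abs_mul, abs_of_pos (hIoc m w').1]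
    have hfac := abs_prod_sub_prod_le (better rankW w' m)
      (fun k => 1 - x k w') (fun k => 1 - Xstar k w')
      (fun k _ => by
        show 0 ≤ 1 - x k w' ∧ 1 - x k w' ≤ 1
        exact ⟨by linarith [(hx01 k w').2], by linarith [(hx01 k w').1]⟩)
      (fun k _ => by
        show 0 ≤ 1 - Xstar k w' ∧ 1 - Xstar k w' ≤ 1
        rcases hX01 k w' with h | h <;> rw [h] <;> norm_num)
    have hsum1 : (∑ k ∈ better rankW w' m, |(1 - x k w') - (1 - Xstar k w')|)
        = ∑ k ∈ better rankW w' m, |x k w' - Xstar k w'| := by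
      apply Finset.sum_congr rfl
      intro k _
      have h : (1 - x k w') - (1 - Xstar k w') = Xstar k w' - x k w' := by ring
      rw [h, abs_sub_comm]
    rw [hsum1] at hfac
    have hsum2 : (∑ k ∈ better rankW w' m, |x k w' - Xstar k w'|) ≤ l1dist x Xstar := by
      calc (∑ k ∈ better rankW w' m, |x k w' - Xstar k w'|)
          ≤ ∑ k, |x k w' - Xstar k w'| :=
            Finset.sum_le_sum_of_subset_of_nonneg (Finset.filter_subset _ _)
              (fun _ _ _ => abs_nonneg _)
        _ ≤ ∑ k, ∑ w'', |x k w'' - Xstar k w''| :=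
            Finset.sum_le_sum fun k _ =>
              Finset.single_le_sum (f := fun w'' => |x k w'' - Xstar k w''|)
                (fun i _ => abs_nonneg _) (Finset.mem_univ w')
        _ = l1dist x Xstar := rfl
    have hl1nn : 0 ≤ l1dist x Xstar := by
      apply Finset.sum_nonneg
      intro k _
      exact Finset.sum_nonneg fun w'' _ => abs_nonneg _
    have hl1c : muMax μp * l1dist x Xstar ≤ c := by
      rw [le_div_iff₀ hmaxpos] at hdist
      linarith
    calc μp m w' * |(∏ k ∈ better rankW w' m, (1 - x k w'))
          - (∏ k ∈ better rankW w' m, (1 - Xstar k w'))|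
        ≤ μp m w' * (∑ k ∈ better rankW w' m, |x k w' - Xstar k w'|) :=
          mul_le_mul_of_nonneg_left hfac (le_of_lt (hIoc m w').1)
      _ ≤ muMax μp * l1dist x Xstar :=
          mul_le_mul (hmaxge m w') hsum2
            (Finset.sum_nonneg fun _ _ => abs_nonneg _) (le_of_lt hmaxpos)
      _ ≤ c := hl1c
  -- conclusion
  have h1 := abs_le.mp (hpert wstar)
  have h2 := abs_le.mp (hpert w)
  have h8 : min (gapDelta μp) (muMin μp) = 8 * c := by rw [hc]; ring
  rw [h8] at hB
  linarith [h1.1, h1.2, h2.1, h2.2]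

end SM
end
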